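/- Let Ω be a probability space with measure π, let X : Ω → S be a random variable taking finitely many values, let E ⊆ Ω be an event with π(E) > 0, and let η be a probability distribution on S such that η(x) > 0 whenever π(X = x) > 0. Then D( law of X given E ∥ η ) ≤ (1/π(E)) · ( D( law of X ∥ η ) + H(π(E)) ). -/

import Mathlib

open MeasureTheory ProbabilityTheory

/-- Kullback–Leibler divergence (base-2 logarithms) between finitely supported
distributions given as real-valued mass functions: `D(p ∥ q) = Σ_x p(x)·log₂(p(x)/q(x))`. -/
noncomputable def klDiv2 {S : Type*} [Fintype S] (p q : S → ℝ) : ℝ :=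
  ∑ s : S, p s * Real.logb 2 (p s / q s)

/-- The binary entropy function, `H(p) = p·log₂(1/p) + (1−p)·log₂(1/(1−p))`,
with `H 0 = H 1 = 0` under the conventions of `Real.logb`. -/
noncomputable def binEnt (p : ℝ) : ℝ :=
  p * Real.logb 2 (1 / p) + (1 - p) * Real.logb 2 (1 / (1 - p))

/-!
Split the law `p` of `X` as `p = t·u + b`, where `t = π(E)`, `u` is the law of `X` given `E`
and `b(x) = π(X = x, Eᶜ)`. Since `x ↦ x log (x / η)` is superadditive on `[0, ∞)`,
`D(p ∥ η) ≥ Σ t u log (t u / η) + Σ b log (b / η)`. The first sum equals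
`t·D(u ∥ η) + t log t`, and by Gibbs' inequality the second is at least `(1 - t) log (1 - t)`
because `b` has mass `1 - t` and `η` is a probability vector. Rearranging gives
`t·D(u ∥ η) ≤ D(p ∥ η) + H(t)`.
-/

section

open Real

lemma mul_log_div_le_mul_log_div {a c : ℝ} (ha : 0 ≤ a) (hac : a ≤ c) (η : ℝ) :
    a * log (a / η) ≤ a * log (c / η) := by
  rcases ha.eq_or_lt with rfl | ha
  · simp
  rcases eq_or_ne η 0 with rfl | hη
  · simp
  rw [log_div ha.ne' hη, log_div (ha.trans_le hac).ne' hη]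
  gcongr

lemma mul_log_div_add_mul_log_div_le {a b : ℝ} (ha : 0 ≤ a) (hb : 0 ≤ b) (η : ℝ) :
    a * log (a / η) + b * log (b / η) ≤ (a + b) * log ((a + b) / η) := by
  have h₁ := mul_log_div_le_mul_log_div ha (le_add_of_nonneg_right hb) η
  have h₂ := mul_log_div_le_mul_log_div hb (le_add_of_nonneg_left ha) η
  linarith

lemma mul_mul_log_mul_div {t u η : ℝ} (ht : t ≠ 0) (huη : u ≠ 0 → η ≠ 0) :
    t * u * log (t * u / η) = t * (u * log (u / η)) + t * log t * u := by
  rcases eq_or_ne u 0 with rfl | hu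
  · simp
  rw [mul_div_assoc, log_mul ht (div_ne_zero hu (huη hu))]
  ring

lemma mul_log_add_sub_le_mul_log_div {B b η : ℝ} (hB : 0 < B) (hb : 0 ≤ b) (hη : 0 ≤ η)
    (hbη : b ≠ 0 → 0 < η) :
    b * log B + (b - B * η) ≤ b * log (b / η) := by
  rcases hb.eq_or_lt with rfl | hb
  · simp only [zero_mul, zero_sub, zero_add, neg_nonpos]
    positivity
  have hη := hbη hb.ne'
  have hlog : log (b / η) = log B + log (b / (B * η)) := by
    rw [← log_mul hB.ne' (by positivity)]
    congr 1
    field_simp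
  have hgibbs : 1 - (b / (B * η))⁻¹ ≤ log (b / (B * η)) :=
    one_sub_inv_le_log_of_pos (by positivity)
  have hmul : b * (1 - (b / (B * η))⁻¹) = b - B * η := by
    field_simp
  rw [hlog, mul_add, ← hmul]
  gcongr

lemma sum_mul_log_sum_le_sum_mul_log_div {S : Type*} [Fintype S] {b η : S → ℝ}
    (hb : ∀ s, 0 ≤ b s) (hη : ∀ s, 0 ≤ η s) (hη1 : ∑ s, η s ≤ 1)
    (hbη : ∀ s, b s ≠ 0 → 0 < η s) :
    (∑ s, b s) * log (∑ s, b s) ≤ ∑ s, b s * log (b s / η s) := by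
  set B := ∑ s, b s
  rcases (Finset.sum_nonneg fun s _ => hb s : 0 ≤ B).eq_or_lt with hB | hB
  · have hb0 : ∀ s, b s = 0 := fun s =>
      (Finset.sum_eq_zero_iff_of_nonneg fun s _ => hb s).1 hB.symm s (Finset.mem_univ s)
    simp [B, hb0]
  calc B * log B ≤ B * log B + (B - B * ∑ s, η s) := by
        have : B * ∑ s, η s ≤ B := mul_le_of_le_one_right hB.le hη1
        linarith
    _ = ∑ s, (b s * log B + (b s - B * η s)) := by
        rw [Finset.sum_add_distrib, Finset.sum_sub_distrib, ← Finset.sum_mul, ← Finset.mul_sum]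
    _ ≤ ∑ s, b s * log (b s / η s) :=
        Finset.sum_le_sum fun s _ => mul_log_add_sub_le_mul_log_div hB (hb s) (hη s) (hbη s)

lemma mul_sum_mul_log_div_le_add_binEntropy {S : Type*} [Fintype S] {u b p η : S → ℝ} {t : ℝ}
    (ht : 0 < t) (hu : ∀ s, 0 ≤ u s) (hb : ∀ s, 0 ≤ b s) (hη : ∀ s, 0 ≤ η s)
    (hp : ∀ s, p s = t * u s + b s) (hu1 : ∑ s, u s = 1) (hp1 : ∑ s, p s = 1)
    (hη1 : ∑ s, η s ≤ 1) (hpη : ∀ s, p s ≠ 0 → 0 < η s) :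
    t * ∑ s, u s * log (u s / η s) ≤ ∑ s, p s * log (p s / η s) + binEntropy t := by
  have hb1 : ∑ s, b s = 1 - t := by
    simp only [hp, Finset.sum_add_distrib, ← Finset.mul_sum, hu1] at hp1
    linarith
  have hscale :
      ∑ s, t * u s * log (t * u s / η s) = t * ∑ s, u s * log (u s / η s) + t * log t := by
    have huη : ∀ s, u s ≠ 0 → η s ≠ 0 := fun s hus =>
      (hpη s (by
        rw [hp s]
        exact (add_pos_of_pos_of_nonneg (mul_pos ht ((hu s).lt_of_ne' hus)) (hb s)).ne')).ne'
    simp only [mul_mul_log_mul_div ht.ne' (huη _), Finset.sum_add_distrib, ← Finset.mul_sum, hu1,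
      mul_one]
  have hsplit : ∑ s, t * u s * log (t * u s / η s) + ∑ s, b s * log (b s / η s) ≤
      ∑ s, p s * log (p s / η s) := by
    rw [← Finset.sum_add_distrib]
    refine Finset.sum_le_sum fun s _ => ?_
    rw [hp s]
    exact mul_log_div_add_mul_log_div_le (mul_nonneg ht.le (hu s)) (hb s) (η s)
  have hgibbs := sum_mul_log_sum_le_sum_mul_log_div hb hη hη1 fun s hbs =>
    hpη s (by
      rw [hp s]
      exact (add_pos_of_nonneg_of_pos (mul_nonneg ht.le (hu s)) ((hb s).lt_of_ne' hbs)).ne')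
  rw [hb1] at hgibbs
  rw [binEntropy, log_inv, log_inv]
  linarith

lemma klDiv2_eq_sum_mul_log_div {S : Type*} [Fintype S] (p q : S → ℝ) :
    klDiv2 p q = (∑ s, p s * log (p s / q s)) / log 2 := by
  simp only [klDiv2, logb, ← mul_div_assoc, Finset.sum_div]

lemma binEnt_eq_binEntropy_div (t : ℝ) : binEnt t = binEntropy t / log 2 := by
  simp only [binEnt, binEntropy, logb, one_div]
  ring

lemma klDiv2_le_of_eq_mul_add {S : Type*} [Fintype S] {u b p η : S → ℝ} {t : ℝ}
    (ht : 0 < t) (hu : ∀ s, 0 ≤ u s) (hb : ∀ s, 0 ≤ b s) (hη : ∀ s, 0 ≤ η s)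
    (hp : ∀ s, p s = t * u s + b s) (hu1 : ∑ s, u s = 1) (hp1 : ∑ s, p s = 1)
    (hη1 : ∑ s, η s ≤ 1) (hpη : ∀ s, p s ≠ 0 → 0 < η s) :
    klDiv2 u η ≤ 1 / t * (klDiv2 p η + binEnt t) := by
  have key := mul_sum_mul_log_div_le_add_binEntropy ht hu hb hη hp hu1 hp1 hη1 hpη
  rw [klDiv2_eq_sum_mul_log_div, klDiv2_eq_sum_mul_log_div, binEnt_eq_binEntropy_div,
    ← add_div, one_div_mul_eq_div, le_div_iff₀ ht, div_mul_eq_mul_div,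
    div_le_div_iff_of_pos_right (log_pos one_lt_two), mul_comm]
  exact key

end

lemma sum_measureReal_fiber_eq_one {Ω S : Type*} [MeasurableSpace Ω] [Fintype S]
    (μ : Measure Ω) [IsProbabilityMeasure μ] {X : Ω → S}
    (hX : ∀ s, MeasurableSet {ω | X ω = s}) :
    ∑ s, μ.real {ω | X ω = s} = 1 := by
  calc ∑ s, μ.real {ω | X ω = s} = μ.real (X ⁻¹' ↑(Finset.univ : Finset S)) :=
        sum_measureReal_preimage_singleton (μ := μ) Finset.univ fun s _ => hX s
    _ = 1 := by simp

/-- **KL divergence under conditioning on an event.**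
Let `X` be a finitely-valued random variable, `E` an event with `π(E) > 0`, and `η` a
probability distribution with `η(x) > 0` whenever `π(X = x) > 0`.  Then
`D(law of X given E ∥ η) ≤ (1/π(E))·( D(law of X ∥ η) + H(π(E)) )`. -/
theorem stmt12 {Ω S : Type*} [MeasurableSpace Ω] [Fintype S]
    (π : Measure Ω) [IsProbabilityMeasure π]
    (X : Ω → S) (hX : ∀ s, MeasurableSet {ω | X ω = s})
    (E : Set Ω) (hE : MeasurableSet E) (hE0 : π E ≠ 0)
    (η : S → ℝ) (hη0 : ∀ s, 0 ≤ η s) (hη1 : (∑ s, η s) = 1)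
    (hηpos : ∀ s, π {ω | X ω = s} ≠ 0 → 0 < η s) :
    klDiv2 (fun s => ((π[|E]) {ω | X ω = s}).toReal) η ≤
      (1 / (π E).toReal) *
        (klDiv2 (fun s => (π {ω | X ω = s}).toReal) η + binEnt (π E).toReal) := by
  have := cond_isProbabilityMeasure (μ := π) hE0
  refine klDiv2_le_of_eq_mul_add (b := fun s => π.real ({ω | X ω = s} \ E))
    (ENNReal.toReal_pos hE0 (measure_ne_top π E)) (fun _ => ENNReal.toReal_nonneg)
    (fun _ => measureReal_nonneg) hη0 (fun s => ?_) (sum_measureReal_fiber_eq_one _ hX)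
    (sum_measureReal_fiber_eq_one π hX) hη1.le
    fun s hs => hηpos s fun h => hs (by simp [h])
  rw [← ENNReal.toReal_mul, mul_comm, cond_mul_eq_inter hE, Set.inter_comm]
  exact (measureReal_inter_add_sdiff hE).symm
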